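/- arXiv:2011.01487 — 7 statements merged into one kernel-verified Lean document; each statement's English description precedes it below -/
import Mathlib

section
/- Let a, b, c, d, e > 0 be real numbers with d·e ≥ 2abc and d+e ≥ max{ a+b+c, (ab+bc+ca+2(a+b+c)−1−2abc)/2, 2(ab+bc+ca)−3abc }. Then for every integer n ≥ 1, the cubic expression U(n) = n²(d+n−1)(e+n−1) − (n+1)(a+n−1)(b+n−1)(c+n−1) is nonnegative. -/
/-!
Substituting `n = m + 1` turns `U(n)` into a cubic in `m` whose coefficients are, from the top,
`d + e - σ₁`, `de + 2(d + e) + 1 - σ₂ - 2σ₁`, `2de + (d + e) - σ₃ - 2σ₂` and `de - 2σ₃`, where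
`σᵢ` are the elementary symmetric functions of `a, b, c`. The hypotheses make each of these
nonnegative (the middle two after also using `de ≥ 2σ₃`), and `m ≥ 0`.
-/

lemma U_eq_cubic_in_pred (a b c d e n : ℝ) :
    n ^ 2 * (d + n - 1) * (e + n - 1) - (n + 1) * (a + n - 1) * (b + n - 1) * (c + n - 1) =
      (d + e - (a + b + c)) * (n - 1) ^ 3
        + (d * e + 2 * (d + e) + 1 - (a * b + b * c + c * a) - 2 * (a + b + c)) * (n - 1) ^ 2
        + (2 * (d * e) + (d + e) - a * b * c - 2 * (a * b + b * c + c * a)) * (n - 1)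
        + (d * e - 2 * (a * b * c)) := by
  ring

lemma cubic_nonneg_of_coeff_nonneg {c₃ c₂ c₁ c₀ x : ℝ} (h₃ : 0 ≤ c₃) (h₂ : 0 ≤ c₂) (h₁ : 0 ≤ c₁)
    (h₀ : 0 ≤ c₀) (hx : 0 ≤ x) : 0 ≤ c₃ * x ^ 3 + c₂ * x ^ 2 + c₁ * x + c₀ := by
  positivity

theorem U_nonneg_general (a b c d e : ℝ) (hde : d * e ≥ 2 * a * b * c)
    (hsum : d + e ≥ max (max (a + b + c)
      ((a * b + b * c + c * a + 2 * (a + b + c) - 1 - 2 * a * b * c) / 2))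
      (2 * (a * b + b * c + c * a) - 3 * a * b * c)) :
    ∀ n : ℕ, 1 ≤ n →
      0 ≤ (n : ℝ)^2 * (d + n - 1) * (e + n - 1) -
        (n + 1) * (a + n - 1) * (b + n - 1) * (c + n - 1) := by
  intro n hn
  obtain ⟨hsum₁₂, hsum₃⟩ := max_le_iff.mp hsum
  obtain ⟨hsum₁, hsum₂⟩ := max_le_iff.mp hsum₁₂
  have hn' : (0 : ℝ) ≤ n - 1 := sub_nonneg.mpr (by exact_mod_cast hn)
  rw [U_eq_cubic_in_pred]
  exact cubic_nonneg_of_coeff_nonneg (by linarith) (by linarith) (by linarith) (by linarith) hn'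

theorem U_nonneg (a b c d e : ℝ) (ha : 0 < a) (hb : 0 < b) (hc : 0 < c)
    (hd : 0 < d) (he : 0 < e) (hde : d * e ≥ 2 * a * b * c)
    (hsum : d + e ≥ max (max (a + b + c)
      ((a * b + b * c + c * a + 2 * (a + b + c) - 1 - 2 * a * b * c) / 2))
      (2 * (a * b + b * c + c * a) - 3 * a * b * c)) :
    ∀ n : ℕ, 1 ≤ n →
      0 ≤ (n : ℝ)^2 * (d + n - 1) * (e + n - 1) -
        (n + 1) * (a + n - 1) * (b + n - 1) * (c + n - 1) :=
  U_nonneg_general a b c d e hde hsum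
end

section
/- Let a, b, c, d, e > 0 be real numbers with d·e ≥ 2abc and d+e ≥ max{ a+b+c, (ab+bc+ca+2(a+b+c)−1−2abc)/2, 2(ab+bc+ca)−3abc }. Define A_1 = 1 and A_n = ((a)_{n−1}(b)_{n−1}(c)_{n−1})/((d)_{n−1}(e)_{n−1}(n−1)!) for n ≥ 2. Then the sequence (n·A_n)_{n≥1} is nonincreasing, i.e., n A_n ≥ (n+1) A_{n+1} for all n ≥ 1. -/
/-!
Consecutive coefficients of ₃F₂ have ratio `(a+m)(b+m)(c+m) / ((d+m)(e+m)(m+1))`, so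
`(m+2) A_{m+2} ≤ (m+1) A_{m+1}` reduces to the polynomial inequality
`(t+2)(a+t)(b+t)(c+t) ≤ (t+1)²(d+t)(e+t)` at `t = m ≥ 0`. Expanded in powers of `t`, each
coefficient of the difference is nonnegative: the `t³` and `t⁰` coefficients are `d+e-(a+b+c)` and
`de-2abc`, and after using `de ≥ 2abc` the `t²` and `t` coefficients are the other two bounds on `d+e`.
-/

/-- The `m`-th Taylor coefficient of `₃F₂(a, b, c; d, e; z)`, i.e. `A (m + 1)`. -/
noncomputable def hypergeometric3F2Coeff {𝕂 : Type*} [Field 𝕂] (a b c d e : 𝕂) (m : ℕ) : 𝕂 :=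
  (ascPochhammer 𝕂 m).eval a * (ascPochhammer 𝕂 m).eval b * (ascPochhammer 𝕂 m).eval c /
    ((ascPochhammer 𝕂 m).eval d * (ascPochhammer 𝕂 m).eval e * (Nat.factorial m : 𝕂))

theorem hypergeometric3F2Coeff_succ {𝕂 : Type*} [Field 𝕂] (a b c d e : 𝕂) (m : ℕ) :
    hypergeometric3F2Coeff a b c d e (m + 1) = hypergeometric3F2Coeff a b c d e m *
      ((a + m) * (b + m) * (c + m) / ((d + m) * (e + m) * (m + 1))) := by
  simp only [hypergeometric3F2Coeff, ascPochhammer_succ_eval, Nat.factorial_succ, Nat.cast_mul,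
    Nat.cast_succ, div_mul_div_comm]
  ring

theorem hypergeometric3F2Coeff_nonneg {a b c d e : ℝ} (ha : 0 < a) (hb : 0 < b) (hc : 0 < c)
    (hd : 0 < d) (he : 0 < e) (m : ℕ) : 0 ≤ hypergeometric3F2Coeff a b c d e m := by
  have := ascPochhammer_pos m a ha
  have := ascPochhammer_pos m b hb
  have := ascPochhammer_pos m c hc
  have := ascPochhammer_pos m d hd
  have := ascPochhammer_pos m e he
  unfold hypergeometric3F2Coeff
  positivity

theorem two_add_mul_cubic_le_one_add_sq_mul_quadratic {a b c d e t : ℝ}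
    (hde : d * e ≥ 2 * a * b * c) (h1 : d + e ≥ a + b + c)
    (h2 : d + e ≥ (a * b + b * c + c * a + 2 * (a + b + c) - 1 - 2 * a * b * c) / 2)
    (h3 : d + e ≥ 2 * (a * b + b * c + c * a) - 3 * a * b * c) (ht : 0 ≤ t) :
    (t + 2) * ((a + t) * (b + t) * (c + t)) ≤ (t + 1) ^ 2 * ((d + t) * (e + t)) := by
  set q := d * e - 2 * a * b * c
  set r₁ := d + e - (a + b + c)
  set r₂ := 2 * (d + e) - (a * b + b * c + c * a + 2 * (a + b + c) - 1 - 2 * a * b * c)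
  set r₃ := d + e - (2 * (a * b + b * c + c * a) - 3 * a * b * c)
  have hq : 0 ≤ q := by linarith
  have hr₁ : 0 ≤ r₁ := by linarith
  have hr₂ : 0 ≤ r₂ := by linarith
  have hr₃ : 0 ≤ r₃ := by linarith
  have : 0 ≤ t ^ 3 * r₁ + t ^ 2 * (q + r₂) + t * (2 * q + r₃) + q := by positivity
  linear_combination this

theorem antitone_mul_hypergeometric3F2Coeff {a b c d e : ℝ} (ha : 0 < a) (hb : 0 < b)
    (hc : 0 < c) (hd : 0 < d) (he : 0 < e) (hde : d * e ≥ 2 * a * b * c) (h1 : d + e ≥ a + b + c)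
    (h2 : d + e ≥ (a * b + b * c + c * a + 2 * (a + b + c) - 1 - 2 * a * b * c) / 2)
    (h3 : d + e ≥ 2 * (a * b + b * c + c * a) - 3 * a * b * c) :
    Antitone fun m : ℕ => ((m : ℝ) + 1) * hypergeometric3F2Coeff a b c d e m := by
  refine antitone_nat_of_succ_le fun m => ?_
  have hm : (0 : ℝ) ≤ m := m.cast_nonneg
  have hratio : ((m : ℝ) + 2) * ((a + m) * (b + m) * (c + m) / ((d + m) * (e + m) * (m + 1)))
      ≤ m + 1 := by
    rw [mul_div_assoc', div_le_iff₀ (by positivity)]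
    linear_combination two_add_mul_cubic_le_one_add_sq_mul_quadratic hde h1 h2 h3 hm
  calc (((m + 1 : ℕ) : ℝ) + 1) * hypergeometric3F2Coeff a b c d e (m + 1)
      = hypergeometric3F2Coeff a b c d e m *
          ((m + 2) * ((a + m) * (b + m) * (c + m) / ((d + m) * (e + m) * (m + 1)))) := by
        rw [hypergeometric3F2Coeff_succ]; push_cast; ring
    _ ≤ hypergeometric3F2Coeff a b c d e m * (m + 1) :=
        mul_le_mul_of_nonneg_left hratio (hypergeometric3F2Coeff_nonneg ha hb hc hd he m)
    _ = (m + 1) * hypergeometric3F2Coeff a b c d e m := mul_comm _ _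

theorem nAn_nonincreasing (a b c d e : ℝ) (ha : 0 < a) (hb : 0 < b) (hc : 0 < c)
    (hd : 0 < d) (he : 0 < e) (hde : d * e ≥ 2 * a * b * c)
    (hsum : d + e ≥ max (max (a + b + c)
      ((a * b + b * c + c * a + 2 * (a + b + c) - 1 - 2 * a * b * c) / 2))
      (2 * (a * b + b * c + c * a) - 3 * a * b * c))
    (A : ℕ → ℝ)
    (hA : ∀ n : ℕ, 1 ≤ n → A n =
      ((ascPochhammer ℝ (n - 1)).eval a * (ascPochhammer ℝ (n - 1)).eval b *
        (ascPochhammer ℝ (n - 1)).eval c) /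
      ((ascPochhammer ℝ (n - 1)).eval d * (ascPochhammer ℝ (n - 1)).eval e *
        (Nat.factorial (n - 1) : ℝ))) :
    ∀ n : ℕ, 1 ≤ n → ((n : ℝ) + 1) * A (n + 1) ≤ (n : ℝ) * A n := by
  obtain ⟨⟨h1, h2⟩, h3⟩ := by simpa only [ge_iff_le, max_le_iff] using hsum
  have hA' (m : ℕ) : A (m + 1) = hypergeometric3F2Coeff a b c d e m := by
    rw [hA (m + 1) m.succ_pos, Nat.add_sub_cancel, hypergeometric3F2Coeff]
  rintro n hn
  obtain ⟨m, rfl⟩ := Nat.exists_eq_add_of_le' hn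
  rw [hA', hA']
  simpa only [Nat.cast_succ, add_assoc, one_add_one_eq_two] using
    antitone_mul_hypergeometric3F2Coeff ha hb hc hd he hde h1 h2 h3 m.le_succ
end

section
/- Let a, b, c, d, e > 0 be real numbers with d·e ≥ 3abc and d+e ≥ max{ a+b+c, (2(ab+bc+ca)+3(a+b+c)−6abc−1)/3, 3(ab+bc+ca)−7abc }. Then for every integer n ≥ 1, the expression X(n) = (2n−1)·n·(d+n−1)(e+n−1) − (2n+1)(a+n−1)(b+n−1)(c+n−1) is nonnegative. -/
/-!
Expanded in powers of `n - 1`, `X(n)` is a cubic whose coefficients are, up to the positive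
weight `n (2n - 1)` on the last one, exactly the four gaps `d + e - …` and `d e - 3 a b c`
bounded below by the hypotheses; hence it is nonnegative for `n ≥ 1`.
-/

theorem X_expand_sub_one (a b c d e x : ℝ) :
    (2 * x - 1) * x * (d + x - 1) * (e + x - 1) -
        (2 * x + 1) * (a + x - 1) * (b + x - 1) * (c + x - 1) =
      2 * (d + e - (a + b + c)) * (x - 1) ^ 3
        + (3 * (d + e) - (2 * (a * b + b * c + c * a) + 3 * (a + b + c) - 6 * a * b * c - 1))
          * (x - 1) ^ 2
        + (d + e - (3 * (a * b + b * c + c * a) - 7 * a * b * c)) * (x - 1)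
        + x * (2 * x - 1) * (d * e - 3 * a * b * c) := by
  ring

theorem X_nonneg_general (a b c d e : ℝ) (hde : d * e ≥ 3 * a * b * c)
    (hsum : d + e ≥ max (max (a + b + c)
      ((2 * (a * b + b * c + c * a) + 3 * (a + b + c) - 6 * a * b * c - 1) / 3))
      (3 * (a * b + b * c + c * a) - 7 * a * b * c)) :
    ∀ n : ℕ, 1 ≤ n →
      0 ≤ (2 * (n : ℝ) - 1) * n * (d + n - 1) * (e + n - 1) -
        (2 * n + 1) * (a + n - 1) * (b + n - 1) * (c + n - 1) := by
  intro n hn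
  simp only [ge_iff_le, max_le_iff] at hsum
  obtain ⟨⟨h₁, h₂⟩, h₃⟩ := hsum
  have hn₁ : (1 : ℝ) ≤ n := by exact_mod_cast hn
  have hs : (0 : ℝ) ≤ n - 1 := sub_nonneg.2 hn₁
  rw [X_expand_sub_one]
  refine add_nonneg (add_nonneg (add_nonneg ?_ ?_) ?_) ?_
  · exact mul_nonneg (mul_nonneg two_pos.le (sub_nonneg.2 h₁)) (pow_nonneg hs 3)
  · exact mul_nonneg (by linarith) (pow_nonneg hs 2)
  · exact mul_nonneg (sub_nonneg.2 h₃) hs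
  · exact mul_nonneg (mul_nonneg (by linarith) (by linarith)) (sub_nonneg.2 hde)

theorem X_nonneg (a b c d e : ℝ) (ha : 0 < a) (hb : 0 < b) (hc : 0 < c)
    (hd : 0 < d) (he : 0 < e) (hde : d * e ≥ 3 * a * b * c)
    (hsum : d + e ≥ max (max (a + b + c)
      ((2 * (a * b + b * c + c * a) + 3 * (a + b + c) - 6 * a * b * c - 1) / 3))
      (3 * (a * b + b * c + c * a) - 7 * a * b * c)) :
    ∀ n : ℕ, 1 ≤ n →
      0 ≤ (2 * (n : ℝ) - 1) * n * (d + n - 1) * (e + n - 1) -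
        (2 * n + 1) * (a + n - 1) * (b + n - 1) * (c + n - 1) :=
  X_nonneg_general a b c d e hde hsum
end

section
/- Let a, b, c, d, e > 0 be real numbers with d·e ≥ 3abc and d+e ≥ max{ a+b+c, (2(ab+bc+ca)+3(a+b+c)−6abc−1)/3, 3(ab+bc+ca)−7abc }. Define A_{2n−1} = ((a)_{n−1}(b)_{n−1}(c)_{n−1})/((d)_{n−1}(e)_{n−1}(n−1)!) for n ≥ 1. Then the sequence ((2n−1)·A_{2n−1})_{n≥1} is nonincreasing. -/
/-!
Consecutive coefficients of `₃F₂` have ratio `(a+k)(b+k)(c+k) / ((d+k)(e+k)(k+1))`, so the claim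
reduces to `(2k+3)(a+k)(b+k)(c+k) ≤ (2k+1)(k+1)(d+k)(e+k)` for `k ≥ 0`. The difference of the two
sides is a cubic in `k` whose four coefficients are nonnegative by the four hypotheses on
`a, b, c, d, e`.
-/

open Polynomial

noncomputable def hypergeom32Coeff (a b c d e : ℝ) (k : ℕ) : ℝ :=
  (ascPochhammer ℝ k).eval a * (ascPochhammer ℝ k).eval b * (ascPochhammer ℝ k).eval c /
    ((ascPochhammer ℝ k).eval d * (ascPochhammer ℝ k).eval e * (k.factorial : ℝ))

section hypergeom32Coeff

variable {a b c d e : ℝ}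

lemma hypergeom32Coeff_nonneg (ha : 0 < a) (hb : 0 < b) (hc : 0 < c) (hd : 0 < d) (he : 0 < e) (k : ℕ) :
    0 ≤ hypergeom32Coeff a b c d e k := by
  unfold hypergeom32Coeff
  have := ascPochhammer_pos k a ha
  have := ascPochhammer_pos k b hb
  have := ascPochhammer_pos k c hc
  have := ascPochhammer_pos k d hd
  have := ascPochhammer_pos k e he
  positivity

lemma hypergeom32Coeff_succ (k : ℕ) :
    hypergeom32Coeff a b c d e (k + 1) = hypergeom32Coeff a b c d e k *
      ((a + k) * (b + k) * (c + k) / ((d + k) * (e + k) * (k + 1))) := by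
  simp only [hypergeom32Coeff, ascPochhammer_succ_eval, Nat.factorial_succ, Nat.cast_mul,
    Nat.cast_succ]
  rw [div_mul_div_comm]
  ring

end hypergeom32Coeff

lemma two_mul_add_three_mul_prod_le {a b c d e k : ℝ} (hk : 0 ≤ k)
    (hde : 3 * a * b * c ≤ d * e) (h₁ : a + b + c ≤ d + e)
    (h₂ : (2 * (a * b + b * c + c * a) + 3 * (a + b + c) - 6 * a * b * c - 1) / 3 ≤ d + e)
    (h₃ : 3 * (a * b + b * c + c * a) - 7 * a * b * c ≤ d + e) :
    (2 * k + 3) * ((a + k) * (b + k) * (c + k)) ≤ (2 * k + 1) * (k + 1) * ((d + k) * (e + k)) := by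
  have c₃ : 0 ≤ (d + e - (a + b + c)) * k ^ 3 := mul_nonneg (by linarith) (by positivity)
  have c₂ : 0 ≤ (3 * (d + e) + 2 * (d * e) + 1 - 2 * (a * b + b * c + c * a)
      - 3 * (a + b + c)) * k ^ 2 := mul_nonneg (by linarith) (by positivity)
  have c₁ : 0 ≤ (3 * (d * e) + (d + e) - 2 * (a * b * c)
      - 3 * (a * b + b * c + c * a)) * k := mul_nonneg (by linarith) hk
  linear_combination 2 * c₃ + c₂ + c₁ + hde

theorem odd_coeff_nonincreasing (a b c d e : ℝ) (ha : 0 < a) (hb : 0 < b) (hc : 0 < c)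
    (hd : 0 < d) (he : 0 < e) (hde : d * e ≥ 3 * a * b * c)
    (hsum : d + e ≥ max (max (a + b + c)
      ((2 * (a * b + b * c + c * a) + 3 * (a + b + c) - 6 * a * b * c - 1) / 3))
      (3 * (a * b + b * c + c * a) - 7 * a * b * c))
    (A : ℕ → ℝ)
    (hA : ∀ n : ℕ, 1 ≤ n → A (2 * n - 1) =
      ((ascPochhammer ℝ (n - 1)).eval a * (ascPochhammer ℝ (n - 1)).eval b *
        (ascPochhammer ℝ (n - 1)).eval c) /
      ((ascPochhammer ℝ (n - 1)).eval d * (ascPochhammer ℝ (n - 1)).eval e *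
        (Nat.factorial (n - 1) : ℝ))) :
    ∀ n : ℕ, 1 ≤ n →
      (2 * ((n : ℝ) + 1) - 1) * A (2 * (n + 1) - 1) ≤ (2 * (n : ℝ) - 1) * A (2 * n - 1) := by
  intro n hn
  obtain ⟨k, rfl⟩ : ∃ k, n = k + 1 := ⟨n - 1, by omega⟩
  have hA' (j : ℕ) : A (2 * (j + 1) - 1) = hypergeom32Coeff a b c d e j := by
    rw [hA (j + 1) j.succ_pos, Nat.add_sub_cancel]; rfl
  simp only [ge_iff_le, max_le_iff] at hsum
  obtain ⟨⟨h₁, h₂⟩, h₃⟩ := hsum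
  have hk : (0 : ℝ) ≤ k := k.cast_nonneg
  have key := two_mul_add_three_mul_prod_le hk hde h₁ h₂ h₃
  have ht := hypergeom32Coeff_nonneg ha hb hc hd he k
  have hD : 0 < (d + k) * (e + k) * (k + 1) := by positivity
  rw [hA' (k + 1), hA' k, hypergeom32Coeff_succ]
  push_cast
  calc (2 * ((k : ℝ) + 1 + 1) - 1) * (hypergeom32Coeff a b c d e k *
          ((a + k) * (b + k) * (c + k) / ((d + k) * (e + k) * (k + 1))))
      = hypergeom32Coeff a b c d e k *
          ((2 * k + 3) * ((a + k) * (b + k) * (c + k)) / ((d + k) * (e + k) * (k + 1))) := by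
        ring
    _ ≤ hypergeom32Coeff a b c d e k *
          ((2 * k + 1) * (k + 1) * ((d + k) * (e + k)) / ((d + k) * (e + k) * (k + 1))) := by
        gcongr
    _ = (2 * ((k : ℝ) + 1) - 1) * hypergeom32Coeff a b c d e k := by
        field_simp; ring
end

section
/- Let a, b, c, d, e > 0 be real numbers and define for n ≥ 1 the quantity U(n) = n(d+n−1)(e+n−1) − (a+n−1)(b+n−1)(c+n−1). If d+e ≥ ab+bc+ca − abc and d·e ≥ abc, then U(n) ≥ U(1) = de − abc ≥ 0 for all n ≥ 1, assuming additionally d+e ≥ a+b+c−1 (so that the coefficient of n² in U is nonnegative) and de+d+e ≥ ab+bc+ca (so that U is nondecreasing after linearization). -/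
/-!
Writing `n = t + 1`, the cubic terms of `U` cancel and
`U(t + 1) = U(1) + (de + d + e - (ab + bc + ca)) t + (d + e + 1 - (a + b + c)) t²`,
so nonnegative coefficients of `t` and `t²` give `U(n) ≥ U(1) = de - abc` for `n ≥ 1`.
-/

def alexanderU (a b c d e x : ℝ) : ℝ :=
  x * (d + x - 1) * (e + x - 1) - (a + x - 1) * (b + x - 1) * (c + x - 1)

lemma alexanderU_one (a b c d e : ℝ) : alexanderU a b c d e 1 = d * e - a * b * c := by
  unfold alexanderU
  ring

lemma alexanderU_add_one (a b c d e t : ℝ) :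
    alexanderU a b c d e (t + 1) = alexanderU a b c d e 1
      + (d * e + d + e - (a * b + b * c + c * a)) * t + (d + e + 1 - (a + b + c)) * t ^ 2 := by
  unfold alexanderU
  ring

lemma alexanderU_one_le (a b c d e x : ℝ) (hx : 1 ≤ x)
    (h_lin : d * e + d + e ≥ a * b + b * c + c * a) (h_quad : d + e ≥ a + b + c - 1) :
    alexanderU a b c d e 1 ≤ alexanderU a b c d e x := by
  obtain ⟨t, ht, rfl⟩ : ∃ t, 0 ≤ t ∧ x = t + 1 := ⟨x - 1, by linarith, by ring⟩
  rw [alexanderU_add_one]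
  have h_lin_term : 0 ≤ (d * e + d + e - (a * b + b * c + c * a)) * t :=
    mul_nonneg (by linarith) ht
  have h_quad_term : 0 ≤ (d + e + 1 - (a + b + c)) * t ^ 2 :=
    mul_nonneg (by linarith) (sq_nonneg t)
  linarith

theorem alexander_U_nonneg_general (a b c d e : ℝ)
    (h2 : d * e ≥ a * b * c)
    (h3 : d + e ≥ a + b + c - 1)
    (h4 : d * e + d + e ≥ a * b + b * c + c * a) :
    ∀ n : ℕ, 1 ≤ n →
      (n : ℝ) * (d + n - 1) * (e + n - 1) - (a + n - 1) * (b + n - 1) * (c + n - 1)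
        ≥ d * e - a * b * c ∧ d * e - a * b * c ≥ 0 := by
  intro n hn
  have h_mono := alexanderU_one_le a b c d e n (by exact_mod_cast hn) h4 h3
  rw [alexanderU_one] at h_mono
  exact ⟨h_mono, sub_nonneg.2 h2⟩

theorem alexander_U_nonneg (a b c d e : ℝ) (ha : 0 < a) (hb : 0 < b) (hc : 0 < c)
    (hd : 0 < d) (he : 0 < e)
    (h1 : d + e ≥ a * b + b * c + c * a - a * b * c)
    (h2 : d * e ≥ a * b * c)
    (h3 : d + e ≥ a + b + c - 1)
    (h4 : d * e + d + e ≥ a * b + b * c + c * a) :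
    ∀ n : ℕ, 1 ≤ n →
      (n : ℝ) * (d + n - 1) * (e + n - 1) - (a + n - 1) * (b + n - 1) * (c + n - 1)
        ≥ d * e - a * b * c ∧ d * e - a * b * c ≥ 0 :=
  alexander_U_nonneg_general a b c d e h2 h3 h4
end

section
/- Suppose f(z) = z + Σ_{n≥2} A_n zⁿ is analytic on the unit disk with real coefficients satisfying 1 ≥ 2A₂ ≥ 3A₃ ≥ ⋯ ≥ n A_n ≥ ⋯ ≥ 0. Then Re( (1−z) f′(z) ) > 0 for all z in the unit disk, i.e., f is close-to-convex with respect to −log(1−z). -/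
/-!
Write `f' = ∑ cₙ zⁿ` with `cₙ = (n + 1) Aₙ₊₁` (and `A₁ = 1`), so `c₀ = 1` and the hypotheses say
exactly that `(cₙ)` is nonnegative and decreasing. Then `(1 - z) f'(z) = 1 - ∑ (cₙ - cₙ₊₁) zⁿ⁺¹`,
and since the differences `cₙ - cₙ₊₁` are nonnegative and telescope to at most `c₀ = 1`, the
subtracted series has modulus at most `|z| < 1`.
-/

open Complex Topology

theorem summable_mul_pow_of_norm_le {a : ℕ → ℂ} {C : ℝ} (ha : ∀ n, ‖a n‖ ≤ C) {z : ℂ}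
    (hz : ‖z‖ < 1) : Summable fun n => a n * z ^ n :=
  .of_norm_bounded ((summable_geometric_of_lt_one (norm_nonneg z) hz).mul_left C) fun n => by
    rw [norm_mul, norm_pow]
    exact mul_le_mul_of_nonneg_right (ha n) (by positivity)

theorem summable_mul_pow_of_norm_natCast_mul_le {a : ℕ → ℂ} {M : ℝ}
    (ha : ∀ n : ℕ, ‖(n : ℂ) * a n‖ ≤ M) {z : ℂ} (hz : ‖z‖ < 1) :
    Summable fun n => a n * z ^ n := by
  have hsucc : ∀ n, ‖a (n + 1) * z‖ ≤ M := fun n => calc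
    ‖a (n + 1) * z‖ ≤ ‖a (n + 1)‖ := by
      rw [norm_mul]; exact mul_le_of_le_one_right (norm_nonneg _) hz.le
    _ ≤ ‖((n + 1 : ℕ) : ℂ) * a (n + 1)‖ := by
      rw [norm_mul]; exact le_mul_of_one_le_left (norm_nonneg _)
        (by rw [norm_natCast]; exact Nat.one_le_cast.mpr n.succ_pos)
    _ ≤ M := ha (n + 1)
  exact (summable_nat_add_iff 1).mp ((summable_mul_pow_of_norm_le hsucc hz).congr fun n => by ring)

theorem hasDerivAt_tsum_mul_pow {a : ℕ → ℂ} {M : ℝ} (ha : ∀ n : ℕ, ‖(n : ℂ) * a n‖ ≤ M) {z : ℂ}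
    (hz : ‖z‖ < 1) :
    HasDerivAt (fun w => ∑' n, a n * w ^ n) (∑' n, (n + 1) * a (n + 1) * z ^ n) z := by
  obtain ⟨r, hzr, hr1⟩ := exists_between hz
  have hM : 0 ≤ M := (norm_nonneg _).trans (ha 0)
  have hbound : ∀ n : ℕ, ∀ y ∈ Metric.ball (0 : ℂ) r,
      ‖(n : ℂ) * a n * y ^ (n - 1)‖ ≤ M * r ^ (n - 1) := fun n y hy => by
    rw [mem_ball_zero_iff] at hy
    rw [norm_mul, norm_pow]
    gcongr
    exact ha n
  have hu : Summable fun n => M * r ^ (n - 1) :=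
    (summable_nat_add_iff 1).mp <| by
      simpa using (summable_geometric_of_lt_one ((norm_nonneg z).trans hzr.le) hr1).mul_left M
  have hz_mem : z ∈ Metric.ball (0 : ℂ) r := mem_ball_zero_iff.mpr hzr
  have hderiv := hasDerivAt_tsum_of_isPreconnected (g := fun (n : ℕ) y => a n * y ^ n)
    (g' := fun (n : ℕ) y => (n : ℂ) * a n * y ^ (n - 1))
    hu Metric.isOpen_ball (convex_ball 0 r).isPreconnected
    (fun (n : ℕ) y _ => ((hasDerivAt_pow n y).const_mul (a n)).congr_deriv (by ring)) hbound
    (Metric.mem_ball_self ((norm_nonneg z).trans_lt hzr))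
    (summable_of_ne_finset_zero (s := {0}) (by simp_all)) hz_mem
  rw [(hu.of_norm_bounded fun n => hbound n z hz_mem).tsum_eq_zero_add] at hderiv
  simpa using hderiv

theorem one_sub_mul_tsum_mul_pow {a : ℕ → ℂ} {z : ℂ} (ha : Summable fun n => a n * z ^ n) :
    (1 - z) * ∑' n, a n * z ^ n = a 0 - ∑' n, (a n - a (n + 1)) * z ^ (n + 1) := by
  have hmul : Summable fun n => a n * z ^ (n + 1) := by
    simpa [pow_succ, mul_assoc] using ha.mul_right z
  have hsucc : Summable fun n => a (n + 1) * z ^ (n + 1) := (summable_nat_add_iff 1).mpr ha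
  have hsplit : ∑' n, a n * z ^ n = a 0 + ∑' n, a (n + 1) * z ^ (n + 1) := by
    simpa using ha.tsum_eq_zero_add
  have hshift : z * ∑' n, a n * z ^ n = ∑' n, a n * z ^ (n + 1) := by
    rw [← tsum_mul_left]; congr 1; funext n; ring
  have hdiff : ∑' n, (a n - a (n + 1)) * z ^ (n + 1) =
      ∑' n, a n * z ^ (n + 1) - ∑' n, a (n + 1) * z ^ (n + 1) := by
    rw [← hmul.tsum_sub hsucc]; congr 1; funext n; ring
  rw [hdiff, ← hshift]
  linear_combination hsplit

theorem norm_tsum_sub_succ_mul_pow_le {c : ℕ → ℝ} (hc : Antitone c) (hc0 : ∀ n, 0 ≤ c n) {z : ℂ}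
    (hz : ‖z‖ ≤ 1) : ‖∑' n, ((c n : ℂ) - c (n + 1)) * z ^ (n + 1)‖ ≤ c 0 * ‖z‖ := by
  have hd : ∀ n, 0 ≤ c n - c (n + 1) := fun n => sub_nonneg.2 (hc n.le_succ)
  have hpartial : ∀ N, ∑ n ∈ Finset.range N, (c n - c (n + 1)) ≤ c 0 := fun N => by
    rw [Finset.sum_range_sub']; linarith [hc0 N]
  have hterm : ∀ n, ‖((c n : ℂ) - c (n + 1)) * z ^ (n + 1)‖ ≤ (c n - c (n + 1)) * ‖z‖ := fun n => by
    rw [norm_mul, ← ofReal_sub, norm_real, Real.norm_of_nonneg (hd n), norm_pow]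
    exact mul_le_mul_of_nonneg_left (pow_le_of_le_one (norm_nonneg z) hz n.succ_ne_zero) (hd n)
  calc ‖∑' n, ((c n : ℂ) - c (n + 1)) * z ^ (n + 1)‖
      ≤ (∑' n, (c n - c (n + 1))) * ‖z‖ :=
        tsum_of_norm_bounded ((summable_of_sum_range_le hd hpartial).hasSum.mul_right ‖z‖) hterm
    _ ≤ c 0 * ‖z‖ := by gcongr; exact Real.tsum_le_of_sum_range_le hd hpartial

theorem re_one_sub_mul_tsum_ge {c : ℕ → ℝ} (hc : Antitone c) (hc0 : ∀ n, 0 ≤ c n) {z : ℂ}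
    (hz : ‖z‖ < 1) : c 0 * (1 - ‖z‖) ≤ ((1 - z) * ∑' n, (c n : ℂ) * z ^ n).re := by
  have hsum : Summable fun n => (c n : ℂ) * z ^ n :=
    summable_mul_pow_of_norm_le (fun n => by
      rw [norm_real, Real.norm_of_nonneg (hc0 n)]; exact hc (Nat.zero_le n)) hz
  rw [one_sub_mul_tsum_mul_pow hsum, sub_re, ofReal_re]
  linarith [re_le_norm (∑' n, ((c n : ℂ) - c (n + 1)) * z ^ (n + 1)),
    norm_tsum_sub_succ_mul_pow_le hc hc0 hz.le]

def normalizedCoeff (A : ℕ → ℝ) : ℕ → ℝ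
  | 0 => 0
  | 1 => 1
  | n + 2 => A (n + 2)

theorem tsum_normalizedCoeff_mul_pow {A : ℕ → ℝ} {z : ℂ}
    (hs : Summable fun n => (normalizedCoeff A n : ℂ) * z ^ n) :
    ∑' n, (normalizedCoeff A n : ℂ) * z ^ n = z + ∑' n : ℕ, (A (n + 2) : ℂ) * z ^ (n + 2) := by
  rw [← hs.sum_add_tsum_nat_add 2]
  simp [Finset.sum_range_succ, normalizedCoeff]

theorem antitone_succ_mul_normalizedCoeff {A : ℕ → ℝ} (h1 : 2 * A 2 ≤ 1)
    (hmono : ∀ n : ℕ, 2 ≤ n → ((n : ℝ) + 1) * A (n + 1) ≤ (n : ℝ) * A n) :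
    Antitone fun n : ℕ => ((n : ℝ) + 1) * normalizedCoeff A (n + 1) := by
  refine antitone_nat_of_succ_le fun n => ?_
  rcases n with _ | n
  · norm_num [normalizedCoeff]; linarith
  · have := hmono (n + 2) (by omega)
    simp only [normalizedCoeff]
    push_cast at this ⊢
    linarith

theorem succ_mul_normalizedCoeff_nonneg {A : ℕ → ℝ} (hpos : ∀ n, 2 ≤ n → 0 ≤ A n) (n : ℕ) :
    0 ≤ ((n : ℝ) + 1) * normalizedCoeff A (n + 1) := by
  rcases n with _ | n
  · norm_num [normalizedCoeff]
  · exact mul_nonneg (by positivity) (hpos (n + 2) (by omega))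

theorem norm_natCast_mul_normalizedCoeff_le_one {A : ℕ → ℝ} (hpos : ∀ n, 2 ≤ n → 0 ≤ A n)
    (h1 : 2 * A 2 ≤ 1)
    (hmono : ∀ n : ℕ, 2 ≤ n → ((n : ℝ) + 1) * A (n + 1) ≤ (n : ℝ) * A n) (n : ℕ) :
    ‖(n : ℂ) * normalizedCoeff A n‖ ≤ 1 := by
  rcases n with _ | n
  · simp
  · rw [← ofReal_natCast, ← ofReal_mul, norm_real, Real.norm_of_nonneg (by
      simpa using succ_mul_normalizedCoeff_nonneg hpos n)]
    simpa [normalizedCoeff] using antitone_succ_mul_normalizedCoeff h1 hmono (Nat.zero_le n)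

theorem ozaki_close_to_convex (A : ℕ → ℝ)
    (hpos : ∀ n, 2 ≤ n → 0 ≤ A n)
    (h1 : 2 * A 2 ≤ 1)
    (hmono : ∀ n : ℕ, 2 ≤ n → ((n : ℝ) + 1) * A (n + 1) ≤ (n : ℝ) * A n)
    (f : ℂ → ℂ)
    (hf : ∀ z ∈ Metric.ball (0 : ℂ) 1, f z = z + ∑' n : ℕ, (A (n + 2) : ℂ) * z ^ (n + 2)) :
    ∀ z ∈ Metric.ball (0 : ℂ) 1, 0 < ((1 - z) * deriv f z).re := by
  intro z hz
  have hbound := norm_natCast_mul_normalizedCoeff_le_one hpos h1 hmono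
  have hf_eq : f =ᶠ[𝓝 z] fun w => ∑' n, (normalizedCoeff A n : ℂ) * w ^ n := by
    filter_upwards [Metric.isOpen_ball.mem_nhds hz] with w hw
    rw [hf w hw, tsum_normalizedCoeff_mul_pow
      (summable_mul_pow_of_norm_natCast_mul_le hbound (mem_ball_zero_iff.1 hw))]
  rw [mem_ball_zero_iff] at hz
  rw [hf_eq.deriv_eq, (hasDerivAt_tsum_mul_pow hbound hz).deriv]
  calc 0 < 1 - ‖z‖ := sub_pos.2 hz
    _ ≤ _ := by
      simpa [normalizedCoeff] using re_one_sub_mul_tsum_ge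
        (antitone_succ_mul_normalizedCoeff h1 hmono) (succ_mul_normalizedCoeff_nonneg hpos) hz
end

section
/- Let a, b, c, d, e > 0 with de ≥ 2abc and d+e ≥ max{a+b+c, (ab+bc+ca+2(a+b+c)−1−2abc)/2, 2(ab+bc+ca)−3abc}. Then the function f(z) = z·₃F₂(a,b,c;d,e;z) satisfies Re((1−z)f′(z)) > 0 on the unit disk; in particular f is univalent (close-to-convex with respect to −log(1−z)). -/
/-! With `G n = (n + 1) A n` the Taylor coefficients of `f'`, summation by parts gives
`(1 - z) f'(z) = G 0 - ∑ (G n - G (n + 1)) z ^ (n + 1)`. If `G` is nonnegative and decreasing,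
the increments sum to at most `G 0`, so the subtracted series has modulus at most `G 0 |z| < G 0`.
Since `G (n + 1) / G n = (n + 2)(a + n)(b + n)(c + n) / ((n + 1)² (d + n)(e + n))`, monotonicity of
`G` is a polynomial inequality in `n`; the hypotheses on `d + e` and `d e` make the coefficients of
the difference, a cubic in `n`, nonnegative. -/

open Complex

lemma summable_succ_mul_geometric {r : ℝ} (hr0 : 0 ≤ r) (hr1 : r < 1) :
    Summable fun n : ℕ => ((n : ℝ) + 1) * r ^ n := by
  have hr : ‖r‖ < 1 := by rwa [Real.norm_of_nonneg hr0]
  simpa [add_mul] using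
    (hasSum_coe_mul_geometric_of_norm_lt_one hr).summable.add (summable_geometric_of_lt_one hr0 hr1)

theorem hasDerivAt_mul_tsum_mul_pow {𝕜 : Type*} [RCLike 𝕜] {a : ℕ → 𝕜} {C : ℝ}
    (ha : ∀ n, ‖a n‖ ≤ C) {z : 𝕜} (hz : ‖z‖ < 1) :
    HasDerivAt (fun y => y * ∑' n, a n * y ^ n) (∑' n : ℕ, ((n : 𝕜) + 1) * a n * z ^ n) z := by
  have hfun : (fun y : 𝕜 => y * ∑' n, a n * y ^ n) = fun y => ∑' n, a n * y ^ (n + 1) := by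
    ext y
    rw [← tsum_mul_left]
    exact tsum_congr fun n => by ring
  rw [hfun]
  obtain ⟨r, hzr, hr1⟩ := exists_between hz
  have hr0 : 0 < r := (norm_nonneg z).trans_lt hzr
  have hC : 0 ≤ C := (norm_nonneg _).trans (ha 0)
  refine hasDerivAt_tsum_of_isPreconnected (u := fun n : ℕ => C * (((n : ℝ) + 1) * r ^ n))
    (g := fun n y => a n * y ^ (n + 1)) (g' := fun n y => ((n : 𝕜) + 1) * a n * y ^ n)
    ((summable_succ_mul_geometric hr0.le hr1).mul_left C) Metric.isOpen_ball
    (convex_ball (0 : 𝕜) r).isPreconnected (fun n y _ => ?_) (fun n y hy => ?_)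
    (Metric.mem_ball_self hr0) (by simp) (mem_ball_zero_iff.mpr hzr)
  · exact ((hasDerivAt_pow (n + 1) y).const_mul (a n)).congr_deriv (by push_cast; ring)
  · have hyr : ‖y‖ ≤ r := (mem_ball_zero_iff.mp hy).le
    have hn : ‖(n : 𝕜) + 1‖ = (n : ℝ) + 1 := by
      exact_mod_cast RCLike.norm_natCast (K := 𝕜) (n + 1)
    rw [norm_mul, norm_mul, norm_pow, hn]
    calc ((n : ℝ) + 1) * ‖a n‖ * ‖y‖ ^ n ≤ ((n : ℝ) + 1) * C * r ^ n := by gcongr; exact ha n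
      _ = C * (((n : ℝ) + 1) * r ^ n) := by ring

theorem re_one_sub_mul_tsum_pos_of_antitone {g : ℕ → ℝ} (hg : Antitone g)
    (hg_nonneg : ∀ n, 0 ≤ g n) (hg0 : 0 < g 0) {z : ℂ} (hz : ‖z‖ < 1) :
    0 < ((1 - z) * ∑' n, (g n : ℂ) * z ^ n).re := by
  set S := ∑' n, (g n : ℂ) * z ^ n
  have hS : HasSum (fun n => (g n : ℂ) * z ^ n) S := by
    refine (Summable.of_norm_bounded
      ((summable_geometric_of_lt_one (norm_nonneg z) hz).mul_left (g 0)) fun n => ?_).hasSum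
    rw [norm_mul, norm_pow, norm_real, Real.norm_of_nonneg (hg_nonneg n)]
    gcongr
    exact hg n.zero_le
  have hdiff : HasSum (fun n => ((g n - g (n + 1) : ℝ) : ℂ) * z ^ (n + 1))
      (g 0 - (1 - z) * S) := by
    have hshift : HasSum (fun n => (g (n + 1) : ℂ) * z ^ (n + 1)) (S - g 0) := by
      simpa using (hasSum_nat_add_iff' 1).mpr hS
    have hterm : (fun n => ((g n - g (n + 1) : ℝ) : ℂ) * z ^ (n + 1)) =
        fun n => z * ((g n : ℂ) * z ^ n) - (g (n + 1) : ℂ) * z ^ (n + 1) := by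
      ext n
      push_cast
      ring
    rw [hterm, show (g 0 : ℂ) - (1 - z) * S = z * S - (S - g 0) by ring]
    exact (hS.mul_left z).sub hshift
  have hinc : ∀ n, 0 ≤ g n - g (n + 1) := fun n => sub_nonneg.mpr (hg n.le_succ)
  have htel : ∀ N, ∑ i ∈ Finset.range N, (g i - g (i + 1)) ≤ g 0 := fun N => by
    rw [Finset.sum_range_sub']
    linarith [hg_nonneg N]
  have hnorm : ‖(g 0 : ℂ) - (1 - z) * S‖ ≤ (∑' n, (g n - g (n + 1))) * ‖z‖ := by
    rw [← hdiff.tsum_eq]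
    refine tsum_of_norm_bounded ((summable_of_sum_range_le hinc htel).hasSum.mul_right ‖z‖)
      fun n => ?_
    rw [norm_mul, norm_pow, norm_real, Real.norm_of_nonneg (hinc n)]
    exact mul_le_mul_of_nonneg_left (pow_le_of_le_one (norm_nonneg z) hz.le n.succ_ne_zero) (hinc n)
  have hre := re_le_norm ((g 0 : ℂ) - (1 - z) * S)
  rw [sub_re, ofReal_re] at hre
  have htsum : (∑' n, (g n - g (n + 1))) * ‖z‖ ≤ g 0 * ‖z‖ :=
    mul_le_mul_of_nonneg_right (Real.tsum_le_of_sum_range_le hinc htel) (norm_nonneg z)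
  linarith [mul_lt_mul_of_pos_left hz hg0]

noncomputable def hyp3F2Coeff (a b c d e : ℝ) (n : ℕ) : ℝ :=
  (ascPochhammer ℝ n).eval a * (ascPochhammer ℝ n).eval b * (ascPochhammer ℝ n).eval c /
    ((ascPochhammer ℝ n).eval d * (ascPochhammer ℝ n).eval e * (Nat.factorial n : ℝ))

lemma hyp3F2Coeff_zero (a b c d e : ℝ) : hyp3F2Coeff a b c d e 0 = 1 := by
  simp [hyp3F2Coeff]

lemma hyp3F2Coeff_succ (a b c d e : ℝ) (n : ℕ) :
    hyp3F2Coeff a b c d e (n + 1) = hyp3F2Coeff a b c d e n *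
      ((a + n) * (b + n) * (c + n) / ((d + n) * (e + n) * (n + 1))) := by
  simp only [hyp3F2Coeff, ascPochhammer_succ_eval, Nat.factorial_succ, Nat.cast_mul, Nat.cast_succ]
  rw [div_mul_div_comm]
  congr 1 <;> ring

lemma hyp3F2Coeff_pos {a b c d e : ℝ} (ha : 0 < a) (hb : 0 < b) (hc : 0 < c) (hd : 0 < d)
    (he : 0 < e) (n : ℕ) : 0 < hyp3F2Coeff a b c d e n := by
  have := ascPochhammer_pos n a ha
  have := ascPochhammer_pos n b hb
  have := ascPochhammer_pos n c hc
  have := ascPochhammer_pos n d hd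
  have := ascPochhammer_pos n e he
  unfold hyp3F2Coeff
  positivity

lemma add_two_mul_cubic_le_add_one_sq_mul_quadratic {a b c d e n : ℝ} (hn : 0 ≤ n)
    (hde : 2 * a * b * c ≤ d * e) (h₁ : a + b + c ≤ d + e)
    (h₂ : (a * b + b * c + c * a + 2 * (a + b + c) - 1 - 2 * a * b * c) / 2 ≤ d + e)
    (h₃ : 2 * (a * b + b * c + c * a) - 3 * a * b * c ≤ d + e) :
    (n + 2) * ((a + n) * (b + n) * (c + n)) ≤ (n + 1) ^ 2 * ((d + n) * (e + n)) := by
  have hexpand : (n + 1) ^ 2 * ((d + n) * (e + n)) - (n + 2) * ((a + n) * (b + n) * (c + n)) =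
      (d + e - (a + b + c)) * n ^ 3
      + (d * e + 2 * (d + e) + 1 - (a * b + b * c + c * a) - 2 * (a + b + c)) * n ^ 2
      + (2 * (d * e) + (d + e) - a * b * c - 2 * (a * b + b * c + c * a)) * n
      + (d * e - 2 * a * b * c) := by
    ring
  have h₃' : 0 ≤ d + e - (a + b + c) := by linarith
  have h₂' : 0 ≤ d * e + 2 * (d + e) + 1 - (a * b + b * c + c * a) - 2 * (a + b + c) := by
    linarith
  have h₁' : 0 ≤ 2 * (d * e) + (d + e) - a * b * c - 2 * (a * b + b * c + c * a) := by linarith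
  have h₀' : 0 ≤ d * e - 2 * a * b * c := by linarith
  linarith [mul_nonneg h₃' (pow_nonneg hn 3), mul_nonneg h₂' (pow_nonneg hn 2), mul_nonneg h₁' hn]

lemma antitone_succ_mul_hyp3F2Coeff {a b c d e : ℝ} (ha : 0 < a) (hb : 0 < b) (hc : 0 < c)
    (hd : 0 < d) (he : 0 < e)
    (hratio : ∀ n : ℕ, ((n : ℝ) + 2) * ((a + n) * (b + n) * (c + n)) ≤
      ((n : ℝ) + 1) ^ 2 * ((d + n) * (e + n))) :
    Antitone fun n : ℕ => ((n : ℝ) + 1) * hyp3F2Coeff a b c d e n := by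
  refine antitone_nat_of_succ_le fun n => ?_
  have hA := hyp3F2Coeff_pos ha hb hc hd he n
  have hY : 0 < ((d + n) * (e + n) * (n + 1) : ℝ) := by positivity
  have hq : ((n : ℝ) + 2) * ((a + n) * (b + n) * (c + n)) / ((d + n) * (e + n) * (n + 1)) ≤
      n + 1 := by
    rw [div_le_iff₀ hY]
    linarith [hratio n]
  calc (((n + 1 : ℕ) : ℝ) + 1) * hyp3F2Coeff a b c d e (n + 1)
      = hyp3F2Coeff a b c d e n *
          (((n : ℝ) + 2) * ((a + n) * (b + n) * (c + n)) / ((d + n) * (e + n) * (n + 1))) := by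
        rw [hyp3F2Coeff_succ]
        push_cast
        ring
    _ ≤ hyp3F2Coeff a b c d e n * (n + 1) := by gcongr
    _ = ((n : ℝ) + 1) * hyp3F2Coeff a b c d e n := mul_comm _ _

theorem hyp3F2_close_to_convex (a b c d e : ℝ) (ha : 0 < a) (hb : 0 < b) (hc : 0 < c)
    (hd : 0 < d) (he : 0 < e) (hde : d * e ≥ 2 * a * b * c)
    (hsum : d + e ≥ max (max (a + b + c)
      ((a * b + b * c + c * a + 2 * (a + b + c) - 1 - 2 * a * b * c) / 2))
      (2 * (a * b + b * c + c * a) - 3 * a * b * c))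
    (f : ℂ → ℂ)
    (hf : ∀ z ∈ Metric.ball (0 : ℂ) 1,
      f z = z * ∑' n : ℕ,
        ((((ascPochhammer ℝ n).eval a * (ascPochhammer ℝ n).eval b *
          (ascPochhammer ℝ n).eval c) /
          ((ascPochhammer ℝ n).eval d * (ascPochhammer ℝ n).eval e *
          (Nat.factorial n : ℝ))) : ℂ) * z ^ n) :
    ∀ z ∈ Metric.ball (0 : ℂ) 1, 0 < ((1 - z) * deriv f z).re := by
  intro z hz
  have hz1 : ‖z‖ < 1 := mem_ball_zero_iff.mp hz
  simp only [ge_iff_le, max_le_iff] at hsum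
  obtain ⟨⟨h₁, h₂⟩, h₃⟩ := hsum
  set A := hyp3F2Coeff a b c d e
  have hA : ∀ n, 0 < A n := hyp3F2Coeff_pos ha hb hc hd he
  have hG : Antitone fun n : ℕ => ((n : ℝ) + 1) * A n :=
    antitone_succ_mul_hyp3F2Coeff ha hb hc hd he fun n =>
      add_two_mul_cubic_le_add_one_sq_mul_quadratic n.cast_nonneg hde h₁ h₂ h₃
  have hG0 : ((0 : ℕ) + 1 : ℝ) * A 0 = 1 := by simp [A, hyp3F2Coeff_zero]
  have hA_le : ∀ n, ‖(A n : ℂ)‖ ≤ 1 := fun n => by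
    rw [norm_real, Real.norm_of_nonneg (hA n).le, ← hG0]
    exact (le_mul_of_one_le_left (hA n).le (by simp)).trans (hG n.zero_le)
  have hf_eq : f =ᶠ[nhds z] fun y => y * ∑' n, (A n : ℂ) * y ^ n := by
    filter_upwards [Metric.isOpen_ball.mem_nhds hz] with y hy
    simp only [hf y hy, A, hyp3F2Coeff, ofReal_div, ofReal_mul, ofReal_natCast]
  rw [hf_eq.deriv_eq, (hasDerivAt_mul_tsum_mul_pow hA_le hz1).deriv]
  exact_mod_cast re_one_sub_mul_tsum_pos_of_antitone hG
    (fun n => (mul_pos n.cast_add_one_pos (hA n)).le) (by rw [hG0]; exact one_pos) hz1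
end
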